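/- Consider the switched system with n = 3, m = 2, A_1 = [[1,0,0],[0,0,1],[0,1,0]], A_2 = [[0,0,1],[1,0,0],[0,1,0]], B_1 = (1,0,0)^T and B_2 = (0,0,0)^T. Then the switching sequence (1,2,2,1,2,1) (where the first entry is the first applied mode) is a controllable sequence, i.e., R((1,2,2,1,2,1)) = ℝ³, and no switching sequence of length at most 5 is controllable. -/

import Mathlib

/-!
Both `A_i` send standard basis vectors to standard basis vectors (`A_1`, `A_2` are permutation
matrices), and `Im B_1 = ℝ e_1`, `Im B_2 = 0`. Hence every reachable space is a coordinate
subspace `span {e_j : j ∈ S(π)}`, where the index set evolves by `S ↦ σ_i(S) ∪ T_i`, and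
controllability becomes the finite condition `S(π) = {1, 2, 3}`, which is decided by computation:
it holds for `(1,2,2,1,2,1)` and fails for all 32 sequences of length 5. As the `A_i` are
invertible, appending modes to a controllable sequence keeps it controllable, so padding reduces
the shorter sequences to length 5.
-/

/-- Reachable space of a discrete-time switched linear control system
`x_k = A_{i_k} x_{k-1} + B_{i_k} u_k` along the switching sequence `π`
(the head of the list is the first applied mode):
`R(ε) = {0}` and `R(π' i) = A_i R(π') + Im(B_i)`. -/
def reach {n m : ℕ} (A : Fin m → Matrix (Fin n) (Fin n) ℝ) {q : Fin m → ℕ}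
    (B : ∀ i, Matrix (Fin n) (Fin (q i)) ℝ) (π : List (Fin m)) :
    Submodule ℝ (Fin n → ℝ) :=
  π.foldl (fun S i =>
    Submodule.map (Matrix.mulVecLin (A i)) S ⊔ LinearMap.range (Matrix.mulVecLin (B i))) ⊥

/-- The subspaces `V_k`: `V_0 = {0}`, `V_1 = Σ_i Im B_i`, and
`V_{k+1} = V_k + Σ_i A_i V_k` for `k ≥ 1`. -/
def Vsp {n m : ℕ} (A : Fin m → Matrix (Fin n) (Fin n) ℝ) {q : Fin m → ℕ}
    (B : ∀ i, Matrix (Fin n) (Fin (q i)) ℝ) : ℕ → Submodule ℝ (Fin n → ℝ)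
  | 0 => ⊥
  | 1 => ⨆ i, LinearMap.range (Matrix.mulVecLin (B i))
  | (k + 2) => Vsp A B (k + 1) ⊔
      ⨆ i, Submodule.map (Matrix.mulVecLin (A i)) (Vsp A B (k + 1))

open Submodule Matrix

section SwitchedSystem

variable {n m : ℕ} {A : Fin m → Matrix (Fin n) (Fin n) ℝ} {q : Fin m → ℕ}
  {B : ∀ i, Matrix (Fin n) (Fin (q i)) ℝ}

def reachStep (A : Fin m → Matrix (Fin n) (Fin n) ℝ) (B : ∀ i, Matrix (Fin n) (Fin (q i)) ℝ)
    (S : Submodule ℝ (Fin n → ℝ)) (i : Fin m) : Submodule ℝ (Fin n → ℝ) :=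
  map (A i).mulVecLin S ⊔ LinearMap.range (B i).mulVecLin

theorem reach_eq_foldl (π : List (Fin m)) : reach A B π = π.foldl (reachStep A B) ⊥ := rfl

theorem reach_append (π ρ : List (Fin m)) :
    reach A B (π ++ ρ) = ρ.foldl (reachStep A B) (reach A B π) :=
  List.foldl_append

theorem reachStep_top (i : Fin m) (hA : IsUnit (A i)) : reachStep A B ⊤ i = ⊤ := by
  rw [reachStep, Submodule.map_top, LinearMap.range_eq_top.2 (mulVec_surjective_iff_isUnit.2 hA),
    top_sup_eq]

theorem foldl_reachStep_top (hA : ∀ i, IsUnit (A i)) (ρ : List (Fin m)) :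
    ρ.foldl (reachStep A B) ⊤ = ⊤ := by
  induction ρ with
  | nil => rfl
  | cons i ρ ih => rw [List.foldl_cons, reachStep_top i (hA i), ih]

theorem reach_append_eq_top (hA : ∀ i, IsUnit (A i)) {π : List (Fin m)} (h : reach A B π = ⊤)
    (ρ : List (Fin m)) : reach A B (π ++ ρ) = ⊤ := by
  rw [reach_append, h, foldl_reachStep_top hA]

theorem reach_ne_top_of_length_le [NeZero m] (hA : ∀ i, IsUnit (A i)) {k : ℕ}
    (hk : ∀ π : List (Fin m), π.length = k → reach A B π ≠ ⊤) {π : List (Fin m)}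
    (hπ : π.length ≤ k) : reach A B π ≠ ⊤ := fun h =>
  hk (π ++ List.replicate (k - π.length) 0) (by simp; omega) (reach_append_eq_top hA h _)

def coordSpan (S : Set (Fin n)) : Submodule ℝ (Fin n → ℝ) :=
  span ℝ ((fun j => Pi.single j 1) '' S)

theorem apply_eq_zero_of_mem_coordSpan {S : Set (Fin n)} {v : Fin n → ℝ} (hv : v ∈ coordSpan S)
    {j : Fin n} (hj : j ∉ S) : v j = 0 := by
  have hle : coordSpan S ≤ LinearMap.ker (LinearMap.proj j) := by
    rw [coordSpan, span_le]
    rintro _ ⟨k, hk, rfl⟩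
    simp [show j ≠ k by rintro rfl; exact hj hk]
  exact hle hv

theorem coordSpan_eq_top_iff {S : Set (Fin n)} : coordSpan S = ⊤ ↔ S = Set.univ := by
  refine ⟨fun h => Set.eq_univ_of_forall fun j => ?_, ?_⟩
  · by_contra hj
    have := apply_eq_zero_of_mem_coordSpan (h ▸ mem_top : Pi.single j (1 : ℝ) ∈ coordSpan S) hj
    simp at this
  · rintro rfl
    rw [coordSpan, Set.image_univ, ← (Pi.basisFun ℝ (Fin n)).span_eq]
    congr! with j
    exact (Pi.basisFun_apply ℝ (Fin n) j).symm

theorem map_coordSpan {M : Matrix (Fin n) (Fin n) ℝ} {f : Fin n → Fin n}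
    (hM : ∀ j, M.col j = Pi.single (f j) 1) (S : Set (Fin n)) :
    map M.mulVecLin (coordSpan S) = coordSpan (f '' S) := by
  rw [coordSpan, coordSpan, map_span, Set.image_image, Set.image_image]
  congr! 2 with j
  rw [mulVecLin_apply, mulVec_single_one, hM]

def coordStep (f : Fin m → Fin n → Fin n) (T : Fin m → Finset (Fin n)) (S : Finset (Fin n))
    (i : Fin m) : Finset (Fin n) :=
  S.image (f i) ∪ T i

def coordReach (f : Fin m → Fin n → Fin n) (T : Fin m → Finset (Fin n)) (π : List (Fin m)) :
    Finset (Fin n) :=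
  π.foldl (coordStep f T) ∅

theorem reach_eq_coordSpan_coordReach {f : Fin m → Fin n → Fin n} {T : Fin m → Finset (Fin n)}
    (hA : ∀ i j, (A i).col j = Pi.single (f i j) 1)
    (hB : ∀ i, span ℝ (Set.range (B i).col) = coordSpan (T i)) (π : List (Fin m)) :
    reach A B π = coordSpan (coordReach f T π) := by
  suffices ∀ S : Finset (Fin n), π.foldl (reachStep A B) (coordSpan S) =
      coordSpan (π.foldl (coordStep f T) S : Finset (Fin n)) by
    simpa [reach_eq_foldl, coordReach, coordSpan] using this ∅
  induction π with
  | nil => exact fun _ => rfl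
  | cons i π ih =>
    intro S
    rw [List.foldl_cons, List.foldl_cons, ← ih]
    congr 1
    rw [reachStep, map_coordSpan (hA i), range_mulVecLin, hB, coordSpan, coordSpan, coordSpan,
      ← span_union, ← Set.image_union, coordStep, Finset.coe_union, Finset.coe_image]

theorem reach_eq_top_iff_coordReach_eq_univ {f : Fin m → Fin n → Fin n}
    {T : Fin m → Finset (Fin n)} (hA : ∀ i j, (A i).col j = Pi.single (f i j) 1)
    (hB : ∀ i, span ℝ (Set.range (B i).col) = coordSpan (T i)) {π : List (Fin m)} :
    reach A B π = ⊤ ↔ coordReach f T π = Finset.univ := by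
  rw [reach_eq_coordSpan_coordReach hA hB, coordSpan_eq_top_iff, ← Finset.coe_univ,
    Finset.coe_inj]

end SwitchedSystem

section Example

def exA : Fin 2 → Matrix (Fin 3) (Fin 3) ℝ :=
  ![!![1, 0, 0; 0, 0, 1; 0, 1, 0], !![0, 0, 1; 1, 0, 0; 0, 1, 0]]

def exB : Fin 2 → Matrix (Fin 3) (Fin 1) ℝ :=
  ![!![1; 0; 0], !![0; 0; 0]]

def exPerm : Fin 2 → Fin 3 → Fin 3 := ![![0, 2, 1], ![1, 2, 0]]

def exInput : Fin 2 → Finset (Fin 3) := ![{0}, ∅]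

theorem exA_col (i : Fin 2) (j : Fin 3) : (exA i).col j = Pi.single (exPerm i j) 1 := by
  ext k
  fin_cases i <;> fin_cases j <;> fin_cases k <;> simp [exA, exPerm]

theorem span_exB_col (i : Fin 2) : span ℝ (Set.range (exB i).col) = coordSpan (exInput i) := by
  rw [coordSpan, Set.range_unique]
  fin_cases i
  · have hcol : (exB 0).col 0 = Pi.single 0 1 := by ext k; fin_cases k <;> simp [exB]
    simp [exInput, hcol]
  · have hcol : (exB 1).col 0 = 0 := by ext k; fin_cases k <;> simp [exB]
    simp [exInput, hcol]

theorem isUnit_exA (i : Fin 2) : IsUnit (exA i) := by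
  rw [isUnit_iff_isUnit_det]
  fin_cases i <;> simp [exA, det_fin_three]

theorem reach_ex_eq_top_iff {π : List (Fin 2)} :
    reach exA exB π = ⊤ ↔ coordReach exPerm exInput π = Finset.univ :=
  reach_eq_top_iff_coordReach_eq_univ exA_col span_exB_col

theorem coordReach_ex_ne_univ_of_length_eq_five :
    ∀ π : List (Fin 2), π.length = 5 → coordReach exPerm exInput π ≠ Finset.univ
  | [a, b, c, d, e], _ => by revert a b c d e; decide

end Example

/-- For the explicit example with `n = 3`, `m = 2`, the sequence `(1,2,2,1,2,1)`
is controllable and no sequence of length at most `5` is controllable. -/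
theorem stmt11 :
    letI A : Fin 2 → Matrix (Fin 3) (Fin 3) ℝ :=
      ![!![1, 0, 0; 0, 0, 1; 0, 1, 0], !![0, 0, 1; 1, 0, 0; 0, 1, 0]]
    letI B : Fin 2 → Matrix (Fin 3) (Fin 1) ℝ :=
      ![!![1; 0; 0], !![0; 0; 0]]
    reach A B [0, 1, 1, 0, 1, 0] = ⊤ ∧
      ∀ π : List (Fin 2), π.length ≤ 5 → reach A B π ≠ ⊤ :=
  ⟨reach_ex_eq_top_iff.2 (by decide), fun _ => reach_ne_top_of_length_le isUnit_exA
    fun π h5 => reach_ex_eq_top_iff.not.2 (coordReach_ex_ne_univ_of_length_eq_five π h5)⟩
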